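/- For every integer C ≥ 2 there exists a threshold φ(C) ≤ 1/2 such that for every probability vector p = (p₁, …, p_C) (p_i ≥ 0, Σᵢ pᵢ = 1) and every index c, if p_c ≥ φ(C) then H₂(p_c) ≥ H(p) / log₂ C, where H₂ is the binary entropy in bits and H(p) is the Shannon entropy of p in bits. -/

import Mathlib

/-- Binary entropy in bits: H₂(q) = −q·log₂ q − (1−q)·log₂(1−q), with 0·log₂ 0 = 0
(automatic since `Real.logb 2 0 = 0`). -/
noncomputable def binEnt (q : ℝ) : ℝ :=
  -(q * Real.logb 2 q) - (1 - q) * Real.logb 2 (1 - q)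

/-- Shannon entropy in bits of a probability vector over `Fin C`, with 0·log₂ 0 = 0. -/
noncomputable def shannonEnt {C : ℕ} (p : Fin C → ℝ) : ℝ :=
  -∑ i, p i * Real.logb 2 (p i)

/-!
Work in nats, with `q = p c ≥ 1/2`. Spreading the mass `1 - q` of the other `C - 1` classes
uniformly can only increase the entropy (concavity of `x ↦ -x log x`), which gives Fano's bound
`H(p) ≤ h(q) + (1 - q) log (C - 1)`. On `[1/2, 1]` the binary entropy lies above its chord
`h(q) ≥ 2 (1 - q) log 2`, and `log (C - 1) ≤ 2 log (C / 2)` because `4 (C - 1) ≤ C²`; together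
`(1 - q) log (C - 1) ≤ h(q) log (C / 2) / log 2`, i.e. `H(p) ≤ h(q) log C / log 2`.
-/

namespace Real

open Finset

lemma sum_negMulLog_le {ι : Type*} (s : Finset ι) {f : ι → ℝ} (hf : ∀ i ∈ s, 0 ≤ f i) :
    ∑ i ∈ s, negMulLog (f i) ≤ negMulLog (∑ i ∈ s, f i) + (∑ i ∈ s, f i) * log #s := by
  rcases s.eq_empty_or_nonempty with rfl | hs
  · simp
  have hn : (0 : ℝ) < #s := by exact_mod_cast hs.card_pos
  have jensen := concaveOn_negMulLog.le_map_sum (t := s) (w := fun _ ↦ (#s : ℝ)⁻¹) (p := f)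
    (fun _ _ ↦ by positivity) (by simp [hn.ne']) hf
  simp only [smul_eq_mul, ← mul_sum, negMulLog_mul] at jensen
  have hinv : negMulLog (#s : ℝ)⁻¹ = (#s : ℝ)⁻¹ * log #s := by
    simp only [negMulLog, log_inv]; ring
  rw [hinv] at jensen
  have := mul_le_mul_of_nonneg_left jensen hn.le
  field_simp at this
  linarith

lemma sum_negMulLog_le_qaryEntropy {ι : Type*} [Fintype ι] {p : ι → ℝ} (hp : ∀ i, 0 ≤ p i)
    (hsum : ∑ i, p i = 1) (c : ι) :
    ∑ i, negMulLog (p i) ≤ qaryEntropy (Fintype.card ι) (1 - p c) := by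
  classical
  have hrest : ∑ i ∈ univ.erase c, p i = 1 - p c := by
    rw [← hsum, ← add_sum_erase univ p (mem_univ c)]; ring
  have hcard : ((Fintype.card ι : ℤ) - 1 : ℤ) = ((#(univ.erase c) : ℕ) : ℝ) := by
    rw [card_erase_of_mem (mem_univ c), card_univ,
      Nat.cast_sub (Fintype.card_pos_iff.mpr ⟨c⟩)]
    push_cast; ring
  have hbound := sum_negMulLog_le (univ.erase c) (f := p) (fun i _ ↦ hp i)
  rw [hrest] at hbound
  rw [← add_sum_erase univ _ (mem_univ c), qaryEntropy, hcard, binEntropy_one_sub,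
    binEntropy_eq_negMulLog_add_negMulLog_one_sub]
  linarith

lemma two_mul_one_sub_mul_log_two_le_binEntropy {q : ℝ} (hq : 1 / 2 ≤ q) (hq1 : q ≤ 1) :
    2 * (1 - q) * log 2 ≤ binEntropy q := by
  have chord := strictConcave_binEntropy.concaveOn.2 (show (2⁻¹ : ℝ) ∈ Set.Icc 0 1 by norm_num)
    (show (1 : ℝ) ∈ Set.Icc 0 1 by norm_num) (show 0 ≤ 2 * (1 - q) by linarith)
    (show 0 ≤ 2 * q - 1 by linarith) (by ring)
  have hq : 2 * (1 - q) * 2⁻¹ + (2 * q - 1) * 1 = q := by ring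
  simpa only [smul_eq_mul, hq, binEntropy_two_inv, binEntropy_one, mul_zero, add_zero] using chord

lemma log_sub_one_le_two_mul_log_div_two {x : ℝ} (hx : 1 < x) :
    log (x - 1) ≤ 2 * log (x / 2) := by
  rw [show 2 * log (x / 2) = log ((x / 2) ^ 2) by rw [log_pow]; norm_num]
  exact log_le_log (by linarith) (by nlinarith [sq_nonneg (x - 2)])

lemma qaryEntropy_one_sub_mul_log_two_le {C : ℕ} (hC : 2 ≤ C) {q : ℝ} (hq : 1 / 2 ≤ q)
    (hq1 : q ≤ 1) : qaryEntropy C (1 - q) * log 2 ≤ binEntropy q * log C := by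
  have hC' : (2 : ℝ) ≤ C := by exact_mod_cast hC
  have hlog2 : 0 < log 2 := log_pos one_lt_two
  have hhalf : 0 ≤ log (C / 2) := log_nonneg (by linarith)
  have hcast : (((C : ℤ) - 1 : ℤ) : ℝ) = C - 1 := by push_cast; ring
  have hchord := two_mul_one_sub_mul_log_two_le_binEntropy hq hq1
  have hlogC := log_sub_one_le_two_mul_log_div_two (x := C) (by linarith)
  have hsplit : log C = log 2 + log (C / 2) := by
    rw [← log_mul two_ne_zero (by positivity)]; ring_nf
  rw [qaryEntropy, hcast, binEntropy_one_sub, hsplit]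
  nlinarith [mul_le_mul_of_nonneg_right hchord hhalf,
    mul_le_mul_of_nonneg_left hlogC (mul_nonneg (sub_nonneg.2 hq1) hlog2.le)]

end Real

open Real

lemma binEnt_eq (q : ℝ) : binEnt q = binEntropy q / log 2 := by
  simp only [binEnt, binEntropy, logb, log_inv]
  ring

lemma shannonEnt_eq {C : ℕ} (p : Fin C → ℝ) :
    shannonEnt p = (∑ i, negMulLog (p i)) / log 2 := by
  simp only [shannonEnt, logb, negMulLog, Finset.sum_div, ← Finset.sum_neg_distrib]
  congr 1; ext i; ring

/-- For every integer C ≥ 2 there exists a threshold φ(C) ≤ 1/2 such that for every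
probability vector p over C classes and every index c, if p_c ≥ φ(C) then
H₂(p_c) ≥ H(p) / log₂ C. -/
theorem stmt_0 (C : ℕ) (hC : 2 ≤ C) :
    ∃ φ : ℝ, φ ≤ 1 / 2 ∧
      ∀ (p : Fin C → ℝ), (∀ i, 0 ≤ p i) → (∑ i, p i) = 1 →
        ∀ c : Fin C, φ ≤ p c →
          shannonEnt p / Real.logb 2 (C : ℝ) ≤ binEnt (p c) := by
  refine ⟨1 / 2, le_rfl, fun p hp hsum c hc => ?_⟩
  have hpc : p c ≤ 1 := hsum ▸ Finset.single_le_sum (fun i _ ↦ hp i) (Finset.mem_univ c)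
  have fano := sum_negMulLog_le_qaryEntropy hp hsum c
  rw [Fintype.card_fin] at fano
  have hlog2 : 0 < log 2 := log_pos one_lt_two
  have hlogC : 0 < log C := log_pos (by exact_mod_cast hC)
  rw [shannonEnt_eq, binEnt_eq, logb, div_div_div_cancel_right₀ hlog2.ne',
    div_le_div_iff₀ hlogC hlog2]
  calc (∑ i, negMulLog (p i)) * log 2 ≤ qaryEntropy C (1 - p c) * log 2 := by gcongr
    _ ≤ binEntropy (p c) * log C := qaryEntropy_one_sub_mul_log_two_le hC hc hpc
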